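/- For the doubling product ⤳ on pairs (tree, pruning), the associator satisfies: (t1,s1) ⤳ [(t2,s2) ⤳ (t3,s3)] − [(t1,s1) ⤳ (t2,s2)] ⤳ (t3,s3) = Σ_{r, v ∈ V(t3)\V(s3)} (t1 →_r (t2 →_v t3), s1·s2·s3), which is symmetric in (t1,s1) and (t2,s2). -/

import Mathlib

open scoped TensorProduct

/-- Planar rooted trees: a tree is a root together with a list of subtrees. -/
inductive RTree : Type where
  | node : List RTree → RTree

instance : Inhabited RTree := ⟨.node []⟩

namespace RTree

-- An injective code of a planar rooted tree.
mutual
  def code : RTree → List ℕ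
    | .node ts => ts.length :: codeL ts
  def codeL : List RTree → List ℕ
    | [] => []
    | t :: ts => code t ++ codeL ts
end

/-- Lexicographic comparison of codes. -/
def lleb : List ℕ → List ℕ → Bool
  | [], _ => true
  | _ :: _, [] => false
  | a :: as, b :: bs => decide (a < b) || (decide (a = b) && lleb as bs)

-- Normal form of a rooted tree: recursively sort the lists of subtrees.
-- Two planar trees represent the same abstract rooted tree iff they have the
-- same normal form.
mutual
  def norm : RTree → RTree
    | .node ts => .node ((normL ts).mergeSort fun a b => lleb (code a) (code b))
  def normL : List RTree → List RTree
    | [] => []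
    | t :: ts => norm t :: normL ts
end

-- Number of vertices.
mutual
  def size : RTree → ℕ
    | .node ts => 1 + sizeL ts
  def sizeL : List RTree → ℕ
    | [] => 0
    | t :: ts => size t + sizeL ts
end

-- Vertices of a tree, as positions (paths of child indices from the root).
mutual
  def vertices : RTree → List (List ℕ)
    | .node ts => [] :: verticesL 0 ts
  def verticesL : ℕ → List RTree → List (List ℕ)
    | _, [] => []
    | i, t :: ts => (vertices t).map (i :: ·) ++ verticesL (i + 1) ts
end

/-- `graftAt t p s` grafts the root of `t` on the vertex at position `p` of `s`
(the new subtree is appended at the end, so positions of `s` are unchanged). -/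
def graftAt (t : RTree) : List ℕ → RTree → RTree
  | [], .node ts => .node (ts ++ [t])
  | i :: q, .node ts =>
      .node (ts.set i (graftAt t q (ts.getD i (.node []))))

end RTree

/-- Abstract rooted trees: planar trees up to sibling permutation. -/
instance treeSetoid : Setoid RTree :=
  ⟨fun a b => a.norm = b.norm, ⟨fun _ => rfl, Eq.symm, Eq.trans⟩⟩

abbrev TreeQ := Quotient treeSetoid

def tq (t : RTree) : TreeQ := Quotient.mk treeSetoid t

/-- A forest, as a multiset of abstract rooted trees. -/
def forestQ (l : List RTree) : Multiset TreeQ := (l.map tq : List TreeQ)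

/-- The vector space `T` spanned by rooted trees. -/
abbrev TM := TreeQ →₀ ℚ

noncomputable def δT (t : RTree) : TM := Finsupp.single (tq t) 1

/-- `t → s`: the sum of all graftings of `t` on the vertices of `s`. -/
noncomputable def graftSum (t s : RTree) : TM :=
  ((RTree.vertices s).map fun p => δT (RTree.graftAt t p s)).sum

/-- The bilinear extension of the grafting product to `T`. -/
noncomputable def pre (a b : TM) : TM :=
  a.sum fun q c => b.sum fun r d => (c * d) • graftSum q.out r.out
/-- Rooted trees with a set of marked ("cut") edges: each child edge carries a
Boolean which is `true` iff the edge belongs to the cut. -/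
inductive CTree : Type where
  | node : List (Bool × CTree) → CTree

instance : Inhabited CTree := ⟨.node []⟩

namespace CTree

-- The underlying tree `t`.
mutual
  def forget : CTree → RTree
    | .node ts => .node (forgetL ts)
  def forgetL : List (Bool × CTree) → List RTree
    | [] => []
    | (_, c) :: ts => forget c :: forgetL ts
end

-- A tree with no marked edge at all.
mutual
  def noMarks : CTree → Bool
    | .node ts => noMarksL ts
  def noMarksL : List (Bool × CTree) → Bool
    | [] => true
    | (b, c) :: ts => !b && noMarks c && noMarksL ts
end

-- Admissibility of the cut: no marked edge above another marked edge,
-- i.e. every path from the root to a leaf contains at most one cut edge.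
mutual
  def adm : CTree → Bool
    | .node ts => admL ts
  def admL : List (Bool × CTree) → Bool
    | [] => true
    | (b, c) :: ts => (if b then noMarks c else adm c) && admL ts
end

-- The pruning `P^c(t)`: the subforest above the cut.
mutual
  def pruneF : CTree → List RTree
    | .node ts => pruneFL ts
  def pruneFL : List (Bool × CTree) → List RTree
    | [] => []
    | (b, c) :: ts => (if b then [forget c] else pruneF c) ++ pruneFL ts
end

-- The trunk `R^c(t)`: the subtree below the cut (containing the root).
mutual
  def trunk : CTree → RTree
    | .node ts => .node (trunkL ts)
  def trunkL : List (Bool × CTree) → List RTree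
    | [] => []
    | (b, c) :: ts => (if b then [] else [trunk c]) ++ trunkL ts
end

-- All vertex positions of the underlying tree.
mutual
  def allPos : CTree → List (List ℕ)
    | .node ts => [] :: allPosL 0 ts
  def allPosL : ℕ → List (Bool × CTree) → List (List ℕ)
    | _, [] => []
    | i, (_, c) :: ts => (allPos c).map (i :: ·) ++ allPosL (i + 1) ts
end

-- Positions of the vertices lying strictly above the cut (vertices of the pruning).
mutual
  def prunePos : CTree → List (List ℕ)
    | .node ts => prunePosL 0 ts
  def prunePosL : ℕ → List (Bool × CTree) → List (List ℕ)
    | _, [] => []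
    | i, (b, c) :: ts =>
        (if b then (allPos c).map (i :: ·) else (prunePos c).map (i :: ·)) ++
          prunePosL (i + 1) ts
end

-- Positions of the vertices of the trunk (not above the cut).
mutual
  def trunkPos : CTree → List (List ℕ)
    | .node ts => [] :: trunkPosL 0 ts
  def trunkPosL : ℕ → List (Bool × CTree) → List (List ℕ)
    | _, [] => []
    | i, (b, c) :: ts =>
        (if b then [] else (trunkPos c).map (i :: ·)) ++ trunkPosL (i + 1) ts
end

-- A plain tree viewed as a cut tree with no marks.
mutual
  def ofTree : RTree → CTree
    | .node ts => .node (ofTreeL ts)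
  def ofTreeL : List RTree → List (Bool × CTree)
    | [] => []
    | t :: ts => (false, ofTree t) :: ofTreeL ts
end

/-- `cgraft x p c` grafts the cut tree `x` (root edge unmarked) at the vertex
at position `p` of `c` (appended last, so positions of `c` are unchanged). -/
def cgraft (x : CTree) : List ℕ → CTree → CTree
  | [], .node ts => .node (ts ++ [(false, x)])
  | i :: q, .node ts =>
      .node (ts.set i
        ((ts.getD i (false, .node [])).1,
          cgraft x q (ts.getD i (false, .node [])).2))

-- injective code and normal form, as for plain trees
mutual
  def code : CTree → List ℕ
    | .node ts => ts.length :: codeL ts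
  def codeL : List (Bool × CTree) → List ℕ
    | [] => []
    | (b, c) :: ts => (if b then 1 else 0) :: (code c ++ codeL ts)
end

mutual
  def cnorm : CTree → CTree
    | .node ts =>
        .node ((cnormL ts).mergeSort fun a b =>
          RTree.lleb ((if a.1 then 1 else 0) :: code a.2) ((if b.1 then 1 else 0) :: code b.2))
  def cnormL : List (Bool × CTree) → List (Bool × CTree)
    | [] => []
    | (b, c) :: ts => (b, cnorm c) :: cnormL ts
end

end CTree

/-- Cut trees up to sibling permutation. -/
instance ctreeSetoid : Setoid CTree :=
  ⟨fun a b => a.cnorm = b.cnorm, ⟨fun _ => rfl, Eq.symm, Eq.trans⟩⟩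

abbrev CQ := Quotient ctreeSetoid

def cq (c : CTree) : CQ := Quotient.mk ctreeSetoid c
/-- The pair `(t, s)` (underlying tree, pruning) attached to a cut tree. -/
noncomputable def pairQ (c : CTree) : TreeQ × Multiset TreeQ :=
  (tq c.forget, forestQ c.pruneF)

/-- The module spanned by pairs (tree, forest); it contains the doubling
space `V` spanned by the pairs (tree, pruning of that tree). -/
abbrev MV := (TreeQ × Multiset TreeQ) →₀ ℚ

noncomputable def δV (c : CTree) : MV := Finsupp.single (pairQ c) 1

noncomputable def toMV (l : List CTree) : MV := (l.map δV).sum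

/-- `(t, s)` belongs to the doubling space `V`, i.e. `s` is the pruning of `t`
along some admissible cut. -/
def PairInV (p : TreeQ × Multiset TreeQ) : Prop :=
  ∃ c : CTree, c.adm = true ∧ pairQ c = p

/-- The doubling pre-Lie product `⤳` at the level of cut trees:
graft the first tree on each vertex of the second one which is not a
vertex of its pruning (i.e. on each trunk vertex). -/
def dmul (c₁ c₂ : CTree) : List CTree :=
  (CTree.trunkPos c₂).map fun p => CTree.cgraft c₁ p c₂

/-- The action `◇` of a tree on the doubling space: graft the tree on each
vertex of the pruning. -/
def dAct (t : RTree) (c : CTree) : List CTree :=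
  (CTree.prunePos c).map fun p => CTree.cgraft (CTree.ofTree t) p c

/-- `t → s` at list level: all graftings of `t` on vertices of `s`. -/
def rmulAll (t s : RTree) : List RTree :=
  (RTree.vertices s).map fun p => RTree.graftAt t p s

/-- All graftings of a tree on the vertices of a forest. -/
def fgraftAll (t : RTree) (f : List RTree) : List (List RTree) :=
  (List.range f.length).flatMap fun i =>
    (rmulAll t (f.getD i default)).map fun w => f.set i w

-- Admissible cuts of a tree/forest, with the associated (pruning, trunk).
mutual
  def treeCuts : RTree → List (List RTree × List RTree)
    | .node ts =>
        ([.node ts], []) ::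
          (forestCuts ts).map fun pr => (pr.1, [RTree.node pr.2])
  def forestCuts : List RTree → List (List RTree × List RTree)
    | [] => [([], [])]
    | t :: ts =>
        (treeCuts t).flatMap fun pr =>
          (forestCuts ts).map fun qr => (pr.1 ++ qr.1, pr.2 ++ qr.2)
end
-- The coproduct of the doubling bialgebra at the level of cut trees:
-- `delta c` enumerates the admissible cuts `c'` of the pruning `s` of `c`,
-- returning the pair of cut trees representing `(t, P^{c'}(s))` and
-- `(R^{c'}(t), R^{c'}(s))`.
mutual
  def cutsP : CTree → List (CTree × CTree)
    | .node ts => (cutsPL ts).map fun pr => (.node pr.1, .node pr.2)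
  def cutsPL : List (Bool × CTree) → List (List (Bool × CTree) × List (Bool × CTree))
    | [] => [([], [])]
    | (_, c) :: ts =>
        (cutsPL ts).flatMap fun pr =>
          ((true, c) :: pr.1, pr.2) ::
            (cutsP c).map fun qr => ((false, qr.1) :: pr.1, (false, qr.2) :: pr.2)
end

mutual
  def delta : CTree → List (CTree × CTree)
    | .node ts => (deltaL ts).map fun pr => (.node pr.1, .node pr.2)
  def deltaL : List (Bool × CTree) → List (List (Bool × CTree) × List (Bool × CTree))
    | [] => [([], [])]
    | (b, c) :: ts =>
        (deltaL ts).flatMap fun pr =>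
          if b then
            ((true, c) :: pr.1, pr.2) ::
              (cutsP c).map fun qr => ((false, qr.1) :: pr.1, (true, qr.2) :: pr.2)
          else
            (delta c).map fun qr => ((false, qr.1) :: pr.1, (false, qr.2) :: pr.2)
end

/-- The Connes–Kreimer Hopf algebra of rooted trees `H = S(T)`,
with basis the forests (multisets of rooted trees). -/
abbrev HCK := AddMonoidAlgebra ℚ (Multiset TreeQ)

noncomputable def singleH (f : Multiset TreeQ) : HCK := AddMonoidAlgebra.single f 1

noncomputable def oneH : HCK := AddMonoidAlgebra.single 0 1

noncomputable def δH (t : RTree) : HCK := singleH {tq t}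

/-- The doubling bialgebra `D = S(V)`, with basis the multisets of
(isomorphism classes of admissibly) cut trees. -/
abbrev DD := AddMonoidAlgebra ℚ (Multiset CQ)

noncomputable def singleD (m : Multiset CQ) : DD := AddMonoidAlgebra.single m 1

noncomputable def δD (c : CTree) : DD := singleD {cq c}

noncomputable def cfq (f : List CTree) : Multiset CQ := (f.map cq : List CQ)

/-- Admissible-cut coproduct on `H`, on a single tree. -/
noncomputable def ΔT (t : RTree) : HCK ⊗[ℚ] HCK :=
  ((treeCuts t).map fun pr => singleH (forestQ pr.1) ⊗ₜ[ℚ] singleH (forestQ pr.2)).sum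

/-- Admissible-cut coproduct on `H`, as a linear map (multiplicative on forests). -/
noncomputable def ΔH : HCK →ₗ[ℚ] HCK ⊗[ℚ] HCK :=
  Finsupp.lsum ℚ (fun (m : Multiset TreeQ) =>
    LinearMap.toSpanSingleton ℚ _ ((m.map fun q => ΔT q.out).prod))
    ∘ₗ (AddMonoidAlgebra.coeffLinearEquiv ℚ).toLinearMap

/-- The coproduct of the doubling bialgebra on a single pair. -/
noncomputable def ΔVt (c : CTree) : DD ⊗[ℚ] DD :=
  ((delta c).map fun pr => δD pr.1 ⊗ₜ[ℚ] δD pr.2).sum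

/-- The coproduct of the doubling bialgebra, as a linear map `D → D ⊗ D`. -/
noncomputable def ΔD : DD →ₗ[ℚ] DD ⊗[ℚ] DD :=
  Finsupp.lsum ℚ (fun (m : Multiset CQ) =>
    LinearMap.toSpanSingleton ℚ _ ((m.map fun q => ΔVt q.out).prod))
    ∘ₗ (AddMonoidAlgebra.coeffLinearEquiv ℚ).toLinearMap

/-- The counit of the doubling bialgebra: `ε (t, s) = ε (s)`. -/
noncomputable def εD : DD →ₗ[ℚ] ℚ :=
  Finsupp.lsum ℚ (fun (m : Multiset CQ) =>
    LinearMap.toSpanSingleton ℚ _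
      ((m.map fun q => if (Quotient.out q).pruneF.length = 0 then (1 : ℚ) else 0).prod))
    ∘ₗ (AddMonoidAlgebra.coeffLinearEquiv ℚ).toLinearMap

/-- The unshuffling coproduct `Γ` of `H' = S(T)`. -/
noncomputable def ΓH : HCK →ₗ[ℚ] HCK ⊗[ℚ] HCK :=
  Finsupp.lsum ℚ (fun m =>
    LinearMap.toSpanSingleton ℚ _
      (((Multiset.antidiagonal m).map fun pq => singleH pq.1 ⊗ₜ[ℚ] singleH pq.2).sum))
    ∘ₗ (AddMonoidAlgebra.coeffLinearEquiv ℚ).toLinearMap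

/-- The unshuffling coproduct `χ` of `D' = S(V)`. -/
noncomputable def χD : DD →ₗ[ℚ] DD ⊗[ℚ] DD :=
  Finsupp.lsum ℚ (fun m =>
    LinearMap.toSpanSingleton ℚ _
      (((Multiset.antidiagonal m).map fun pq => singleD pq.1 ⊗ₜ[ℚ] singleD pq.2).sum))
    ∘ₗ (AddMonoidAlgebra.coeffLinearEquiv ℚ).toLinearMap

/-- The second projection `P₂ (t, s) = s`, as a linear map `D → H`. -/
noncomputable def P₂ : DD →ₗ[ℚ] HCK :=
  Finsupp.lsum ℚ (fun (m : Multiset CQ) =>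
    LinearMap.toSpanSingleton ℚ _ (singleH ((m.map fun q => forestQ (Quotient.out q).pruneF).sum)))
    ∘ₗ (AddMonoidAlgebra.coeffLinearEquiv ℚ).toLinearMap
/-- Representative forest (list of planar trees) of a multiset of tree classes. -/
noncomputable def repT (m : Multiset TreeQ) : List RTree := m.toList.map Quotient.out

/-- A single tree acting by grafting on `H` (extended Oudom–Guin `▷` of a tree
on products: graft on one factor of each forest). -/
noncomputable def rrtrT (t : RTree) (x : HCK) : HCK :=
  x.coeff.sum fun m r => r • ((fgraftAll t (repT m)).map fun f => singleH (forestQ f)).sum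

/-- The Oudom–Guin extension of the grafting pre-Lie product of rooted trees to
forests: `1 ▷ b = b`, `(x a) ▷ b = x ▷ (a ▷ b) - (x ▷ a) ▷ b`
(defined with a fuel argument equal to the length of the forest). -/
noncomputable def rrtrL : ℕ → List RTree → HCK → HCK
  | _, [], x => x
  | 0, _ :: _, _ => 0
  | n + 1, t :: a, x =>
      rrtrT t (rrtrL n a x) - ((fgraftAll t a).map fun b => rrtrL n b x).sum

noncomputable def rrtrF (a : List RTree) (x : HCK) : HCK := rrtrL a.length a x

/-- The Oudom–Guin product `⋆` on `H' = S(T)`: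
`a ⋆ b = Σ a⁽¹⁾ (a⁽²⁾ ▷ b)`. -/
noncomputable def starH (x y : HCK) : HCK :=
  x.coeff.sum fun m r =>
    r • ((Multiset.antidiagonal m).map fun pq => singleH pq.1 * rrtrF (repT pq.2) y).sum

/-- The module of pairs of forests (first component ⊗ pruning component),
receiving both `D'` and the image of the map `α`. -/
abbrev WD := (Multiset TreeQ × Multiset TreeQ) →₀ ℚ

/-- `α ((f, s) ⊗ y) = (f ⋆ y, s)`. -/
noncomputable def alphaW (x : WD) (y : HCK) : WD :=
  x.sum fun p c =>
    c • Finsupp.mapDomain (fun g => (g, p.2)) (starH (singleH p.1) y).coeff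

/-- Representative list of cut trees of a multiset of cut-tree classes. -/
noncomputable def repC (m : Multiset CQ) : List CTree := m.toList.map Quotient.out

/-- Graftings of a cut tree on one factor of a forest of cut trees, where the
admitted grafting positions on each factor are prescribed by `g`. -/
def fgraftC (g : CTree → CTree → List CTree) (c : CTree) (f : List CTree) :
    List (List CTree) :=
  (List.range f.length).flatMap fun i =>
    (g c (f.getD i default)).map fun w => f.set i w

/-- all-vertex graftings of a cut tree on a cut tree (used for the `H'`-product
acting on the first components). -/
def dmulAll (c₁ c₂ : CTree) : List CTree :=
  (CTree.allPos c₂).map fun p => CTree.cgraft c₁ p c₂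

noncomputable def singleDF (f : List CTree) : DD := singleD (cfq f)

/-- A single cut tree acting on `D` by `g`-grafting on one factor. -/
noncomputable def crtrT (g : CTree → CTree → List CTree) (c : CTree) (x : DD) : DD :=
  x.coeff.sum fun m r => r • ((fgraftC g c (repC m)).map singleDF).sum

/-- Oudom–Guin extension of the `g`-grafting pre-Lie product to forests of cut
trees (fuel version). -/
noncomputable def crtrL (g : CTree → CTree → List CTree) : ℕ → List CTree → DD → DD
  | _, [], x => x
  | 0, _ :: _, _ => 0
  | n + 1, c :: a, x =>
      crtrT g c (crtrL g n a x) - ((fgraftC g c a).map fun b => crtrL g n b x).sum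

noncomputable def crtrF (g : CTree → CTree → List CTree) (a : List CTree) (x : DD) : DD :=
  crtrL g a.length a x

/-- Oudom–Guin product on `S` of cut trees associated with the grafting rule `g`. -/
noncomputable def starC (g : CTree → CTree → List CTree) (x y : DD) : DD :=
  x.coeff.sum fun m r =>
    r • ((Multiset.antidiagonal m).map fun pq => singleD pq.1 * crtrF g (repC pq.2) y).sum

/-- The Oudom–Guin product `★` of the doubling pre-Lie algebra `(V, ⤳)`. -/
noncomputable def starD : DD → DD → DD := starC dmul

/-- The Oudom–Guin product `⋆` of `(T, →)` acting on decorated elements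
(grafting on all vertices). -/
noncomputable def starDAll : DD → DD → DD := starC dmulAll

/-- `H'` embedded in the decorated algebra (forests with no cut edge). -/
noncomputable def embedH (x : HCK) : DD :=
  x.coeff.sum fun m r => AddMonoidAlgebra.single (m.map fun q => cq (CTree.ofTree (Quotient.out q))) r

/-- The action `α (x ⊗ y) = (t ⋆ y, s)` computed on decorated elements. -/
noncomputable def alphaD (x : DD) (y : HCK) : DD := starDAll x (embedH y)

/-- Projection of a decorated element onto the pair
`(underlying forest, total pruning)`. -/
noncomputable def πD : DD →ₗ[ℚ] WD :=
  Finsupp.lsum ℚ (fun (m : Multiset CQ) =>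
    LinearMap.toSpanSingleton ℚ _
      (Finsupp.single
        (m.map fun q => tq (Quotient.out q).forget,
          (m.map fun q => forestQ (Quotient.out q).pruneF).sum) (1 : ℚ)))
    ∘ₗ (AddMonoidAlgebra.coeffLinearEquiv ℚ).toLinearMap



namespace RTree

lemma lleb_total : ∀ a b : List ℕ, lleb a b || lleb b a := by
  intro a
  induction a with
  | nil => intro b; simp [lleb]
  | cons x as ih =>
    intro b
    cases b with
    | nil => simp [lleb]
    | cons y bs =>
      simp only [lleb, Bool.or_eq_true, decide_eq_true_eq, Bool.and_eq_true]
      rcases lt_trichotomy x y with h | h | h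
      · tauto
      · subst h
        have := ih bs
        simp only [Bool.or_eq_true] at this
        tauto
      · tauto

lemma lleb_trans : ∀ a b c : List ℕ, lleb a b → lleb b c → lleb a c := by
  intro a
  induction a with
  | nil => intro b c _ _; simp [lleb]
  | cons x as ih =>
    intro b c hab hbc
    cases b with
    | nil => simp [lleb] at hab
    | cons y bs =>
      cases c with
      | nil => simp [lleb] at hbc
      | cons z cs =>
        simp only [lleb, Bool.or_eq_true, decide_eq_true_eq, Bool.and_eq_true] at *
        rcases hab with h1 | ⟨h1, h1'⟩ <;> rcases hbc with h2 | ⟨h2, h2'⟩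
        · exact Or.inl (h1.trans h2)
        · exact Or.inl (h2 ▸ h1)
        · exact Or.inl (h1 ▸ h2)
        · exact Or.inr ⟨h1.trans h2, ih _ _ h1' h2'⟩

lemma lleb_antisymm : ∀ a b : List ℕ, lleb a b → lleb b a → a = b := by
  intro a
  induction a with
  | nil => intro b _ hba; cases b with
    | nil => rfl
    | cons y bs => simp [lleb] at hba
  | cons x as ih =>
    intro b hab hba
    cases b with
    | nil => simp [lleb] at hab
    | cons y bs =>
      simp only [lleb, Bool.or_eq_true, decide_eq_true_eq, Bool.and_eq_true] at hab hba
      rcases hab with h1 | ⟨h1, h1'⟩ <;> rcases hba with h2 | ⟨h2, h2'⟩ <;>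
        first
        | exact absurd (h1 ▸ h2) (lt_irrefl _)
        | (exfalso; omega)
        | exact by rw [h1, ih _ h1' h2']

lemma codeL_injAux : ∀ n (a b : List RTree) (l₁ l₂ : List ℕ),
    (codeL a).length ≤ n → a.length = b.length →
    codeL a ++ l₁ = codeL b ++ l₂ → a = b ∧ l₁ = l₂ := by
  intro n
  induction n with
  | zero =>
    intro a b l₁ l₂ hn hlen heq
    cases a with
    | nil =>
      cases b with
      | nil => simpa [codeL] using heq
      | cons t bs => simp at hlen
    | cons t as =>
      obtain ⟨ts⟩ := t
      simp [codeL, code] at hn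
  | succ n ih =>
    intro a b l₁ l₂ hn hlen heq
    cases a with
    | nil =>
      cases b with
      | nil => simpa [codeL] using heq
      | cons t bs => simp at hlen
    | cons t as =>
      cases b with
      | nil => simp at hlen
      | cons t' bs =>
        obtain ⟨ts⟩ := t
        obtain ⟨ts'⟩ := t'
        simp only [codeL, code, List.cons_append, List.append_assoc, List.cons.injEq] at heq
        obtain ⟨hhead, htail⟩ := heq
        have h1 : (codeL ts).length ≤ n := by
          simp only [codeL, code, List.length_cons, List.length_append] at hn
          omega
        obtain ⟨hts, hrest⟩ := ih ts ts' (codeL as ++ l₁) (codeL bs ++ l₂) h1 hhead htail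
        have h2 : (codeL as).length ≤ n := by
          simp only [codeL, code, List.length_cons, List.length_append] at hn
          omega
        have hlen' : as.length = bs.length := by simpa using hlen
        obtain ⟨has, hl⟩ := ih as bs l₁ l₂ h2 hlen' hrest
        exact ⟨by rw [hts, has], hl⟩

lemma code_inj : ∀ a b : RTree, code a = code b → a = b := by
  rintro ⟨ts⟩ ⟨ts'⟩ h
  simp only [code, List.cons.injEq] at h
  obtain ⟨hlen, hc⟩ := h
  have := codeL_injAux (codeL ts).length ts ts' [] [] le_rfl hlen (by simp [hc])
  rw [this.1]

/-- mergeSort by code-lex order only depends on the list up to permutation. -/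
lemma mergeSort_code_congr {l₁ l₂ : List RTree} (h : l₁.Perm l₂) :
    l₁.mergeSort (fun a b => lleb (code a) (code b)) =
      l₂.mergeSort (fun a b => lleb (code a) (code b)) := by
  haveI : Std.Antisymm (fun a b => lleb (code a) (code b) = true) :=
    ⟨fun a b hab hba => code_inj _ _ (lleb_antisymm _ _ hab hba)⟩
  refine List.Perm.eq_of_pairwise' (r := fun a b => lleb (code a) (code b) = true) ?_ ?_ ?_
  rotate_right
  · exact ((l₁.mergeSort_perm _).trans h).trans (l₂.mergeSort_perm _).symm
  · exact List.pairwise_mergeSort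
      (fun a b c h1 h2 => lleb_trans (code a) (code b) (code c) h1 h2)
      (fun a b => lleb_total (code a) (code b)) l₁
  · exact List.pairwise_mergeSort
      (fun a b c h1 h2 => lleb_trans (code a) (code b) (code c) h1 h2)
      (fun a b => lleb_total (code a) (code b)) l₂

lemma normL_nil : normL [] = [] := by simp [normL]

lemma normL_cons (t : RTree) (ts : List RTree) : normL (t :: ts) = norm t :: normL ts := by
  simp [normL]

lemma normL_append (l₁ l₂ : List RTree) : normL (l₁ ++ l₂) = normL l₁ ++ normL l₂ := by
  induction l₁ with
  | nil => simp [normL_nil]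
  | cons t ts ih => simp [normL_cons, ih]

lemma normL_set (l : List RTree) : ∀ (i : ℕ) (x : RTree),
    normL (l.set i x) = (normL l).set i (norm x) := by
  induction l with
  | nil => intro i x; simp [normL_nil]
  | cons t ts ih =>
    intro i x
    cases i with
    | zero => simp [normL_cons]
    | succ i => simp [normL_cons, ih]

lemma norm_node_perm {l₁ l₂ : List RTree} (h : (normL l₁).Perm (normL l₂)) :
    norm (.node l₁) = norm (.node l₂) := by
  simp only [norm]
  rw [mergeSort_code_congr h]

end RTree
namespace CTree

/-- Valid positions in a cut tree. -/
def Val : List ℕ → CTree → Prop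
  | [], _ => True
  | i :: q, .node ts => ∃ h : i < ts.length, Val q (ts[i]).2

lemma trunkPosL_nil (j : ℕ) : trunkPosL j ([] : List (Bool × CTree)) = [] := by
  simp [trunkPosL]

lemma trunkPosL_cons (j : ℕ) (b : Bool) (c : CTree) (ts : List (Bool × CTree)) :
    trunkPosL j ((b, c) :: ts) =
      (if b then [] else (trunkPos c).map (j :: ·)) ++ trunkPosL (j + 1) ts := by
  simp [trunkPosL]

lemma trunkPos_node (ts : List (Bool × CTree)) :
    trunkPos (.node ts) = [] :: trunkPosL 0 ts := by
  simp [trunkPos]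

lemma trunkPosL_append (l₁ l₂ : List (Bool × CTree)) : ∀ j,
    trunkPosL j (l₁ ++ l₂) = trunkPosL j l₁ ++ trunkPosL (j + l₁.length) l₂ := by
  induction l₁ with
  | nil => intro j; simp [trunkPosL_nil]
  | cons p ts ih =>
    intro j
    obtain ⟨b, c⟩ := p
    simp only [List.cons_append, trunkPosL_cons, ih (j + 1), List.length_cons,
      List.append_assoc]
    ring_nf

lemma mem_trunkPosL {p : List ℕ} {ts : List (Bool × CTree)} : ∀ {j : ℕ},
    p ∈ trunkPosL j ts ↔
      ∃ (i : ℕ) (h : i < ts.length) (q : List ℕ),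
        p = (j + i) :: q ∧ (ts[i]).1 = false ∧ q ∈ trunkPos (ts[i]).2 := by
  induction ts with
  | nil => intro j; simp [trunkPosL_nil]
  | cons x ts ih =>
    intro j
    obtain ⟨b, c⟩ := x
    rw [trunkPosL_cons, List.mem_append]
    constructor
    · rintro (h | h)
      · cases b with
        | true => simp at h
        | false =>
          simp only [if_false, List.mem_map, Bool.false_eq_true] at h
          obtain ⟨q, hq, rfl⟩ := h
          exact ⟨0, by simp, q, by simp, by simp, by simpa using hq⟩
      · obtain ⟨i, hi, q, hpq, hb, hq⟩ := ih.1 h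
        refine ⟨i + 1, by simpa using hi, q, ?_, by simpa using hb, by simpa using hq⟩
        rw [hpq]; congr 1; omega
    · rintro ⟨i, hi, q, rfl, hb, hq⟩
      cases i with
      | zero =>
        left
        simp only [List.getElem_cons_zero] at hb hq
        subst hb
        simp only [if_neg (by simp : ¬ (false = true))]
        exact List.mem_map.2 ⟨q, hq, by simp⟩
      | succ i =>
        right
        refine ih.2 ⟨i, by simpa using hi, q, ?_, by simpa using hb, by simpa using hq⟩
        congr 1; omega

end CTree
namespace CTree

lemma cgraft_nil (x : CTree) (ts : List (Bool × CTree)) :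
    cgraft x [] (.node ts) = .node (ts ++ [(false, x)]) := by
  simp [cgraft]

lemma cgraft_cons (x : CTree) (i : ℕ) (q : List ℕ) (ts : List (Bool × CTree))
    (h : i < ts.length) :
    cgraft x (i :: q) (.node ts) = .node (ts.set i ((ts[i]).1, cgraft x q (ts[i]).2)) := by
  simp [cgraft, List.getD, List.getElem?_eq_getElem h]

lemma val_of_mem_trunkPos : ∀ (v : List ℕ) (t : CTree), v ∈ trunkPos t → Val v t := by
  intro v
  induction v with
  | nil => intro t _; trivial
  | cons i q ih =>
    rintro ⟨ts⟩ hv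
    rw [trunkPos_node] at hv
    rcases List.mem_cons.mp hv with hv | hv
    · simp at hv
    · obtain ⟨i', hi, q', hpq, hb, hq⟩ := mem_trunkPosL.1 hv
      simp only [Nat.zero_add] at hpq
      obtain ⟨rfl, rfl⟩ : i = i' ∧ q = q' := by
        injection hpq with h1 h2; exact ⟨h1, h2⟩
      exact ⟨hi, ih _ hq⟩

lemma forgetL_nil : forgetL [] = [] := by simp [forgetL]

lemma forgetL_cons (b : Bool) (c : CTree) (ts : List (Bool × CTree)) :
    forgetL ((b, c) :: ts) = forget c :: forgetL ts := by simp [forgetL]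

lemma forgetL_append (l₁ l₂ : List (Bool × CTree)) :
    forgetL (l₁ ++ l₂) = forgetL l₁ ++ forgetL l₂ := by
  induction l₁ with
  | nil => simp [forgetL_nil]
  | cons p ts ih => obtain ⟨b, c⟩ := p; simp [forgetL_cons, ih]

lemma forgetL_set (l : List (Bool × CTree)) : ∀ (i : ℕ) (y : Bool × CTree),
    forgetL (l.set i y) = (forgetL l).set i (forget y.2) := by
  induction l with
  | nil => intro i y; simp [forgetL_nil]
  | cons p ts ih =>
    intro i y
    obtain ⟨b, c⟩ := p
    cases i with
    | zero => obtain ⟨b', c'⟩ := y; simp [forgetL_cons]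
    | succ i => simp [forgetL_cons, ih]

lemma pruneFL_nil : pruneFL [] = [] := by simp [pruneFL]

lemma pruneFL_cons (b : Bool) (c : CTree) (ts : List (Bool × CTree)) :
    pruneFL ((b, c) :: ts) = (if b then [forget c] else pruneF c) ++ pruneFL ts := by
  simp [pruneFL]

lemma pruneFL_append (l₁ l₂ : List (Bool × CTree)) :
    pruneFL (l₁ ++ l₂) = pruneFL l₁ ++ pruneFL l₂ := by
  induction l₁ with
  | nil => simp [pruneFL_nil]
  | cons p ts ih => obtain ⟨b, c⟩ := p; simp [pruneFL_cons, ih]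

/-- Replacing an entry changes `pruneFL` by swapping the corresponding block
(multiset form). -/
lemma pruneFL_set (ts : List (Bool × CTree)) : ∀ (i : ℕ) (y : Bool × CTree)
    (_ : i < ts.length),
    (pruneFL (ts.set i y) : Multiset RTree) + (pruneFL [ts[i]] : Multiset RTree) =
      (pruneFL ts : Multiset RTree) + (pruneFL [y] : Multiset RTree) := by
  induction ts with
  | nil => intro i y h; simp at h
  | cons p ts ih =>
    intro i y h
    obtain ⟨b, c⟩ := p
    cases i with
    | zero =>
      simp only [List.set_cons_zero, List.getElem_cons_zero]
      obtain ⟨b', c'⟩ := y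
      simp only [pruneFL_cons, pruneFL_nil, List.append_nil, ← Multiset.coe_add]
      abel
    | succ i =>
      have h' : i < ts.length := by simpa using h
      simp only [List.set_cons_succ, List.getElem_cons_succ, pruneFL_cons, ← Multiset.coe_add]
      have := ih i y h'
      rw [add_assoc, this, ← add_assoc]

/-- Same for `trunkPosL`. -/
lemma trunkPosL_set (ts : List (Bool × CTree)) : ∀ (j i : ℕ) (y : Bool × CTree)
    (_ : i < ts.length),
    (trunkPosL j (ts.set i y) : Multiset (List ℕ)) + (trunkPosL (j + i) [ts[i]] : Multiset _) =
      (trunkPosL j ts : Multiset _) + (trunkPosL (j + i) [y] : Multiset _) := by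
  induction ts with
  | nil => intro j i y h; simp at h
  | cons p ts ih =>
    intro j i y h
    obtain ⟨b, c⟩ := p
    cases i with
    | zero =>
      simp only [List.set_cons_zero, List.getElem_cons_zero, Nat.add_zero]
      obtain ⟨b', c'⟩ := y
      simp only [trunkPosL_cons, trunkPosL_nil, List.append_nil, ← Multiset.coe_add]
      abel
    | succ i =>
      have h' : i < ts.length := by simpa using h
      simp only [List.set_cons_succ, List.getElem_cons_succ, trunkPosL_cons, ← Multiset.coe_add]
      have := ih (j + 1) i y h'
      have harith : j + 1 + i = j + (i + 1) := by omega
      rw [harith] at this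
      rw [add_assoc, this, ← add_assoc]

end CTree
namespace RTree

lemma norm_node_set_congr (l : List RTree) (i : ℕ) {x y : RTree} (h : norm x = norm y) :
    norm (.node (l.set i x)) = norm (.node (l.set i y)) := by
  simp only [norm, normL_set, h]

end RTree

namespace CTree

lemma pruneF_node (ts : List (Bool × CTree)) : pruneF (.node ts) = pruneFL ts := by
  simp [pruneF]

lemma forget_node (ts : List (Bool × CTree)) : forget (.node ts) = .node (forgetL ts) := by
  simp [forget]

lemma pruneFL_single (b : Bool) (c : CTree) :
    pruneFL [(b, c)] = if b then [forget c] else pruneF c := by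
  simp [pruneFL_cons, pruneFL_nil]

lemma trunkPosL_single (j : ℕ) (b : Bool) (c : CTree) :
    trunkPosL j [(b, c)] = if b then [] else (trunkPos c).map (j :: ·) := by
  simp [trunkPosL_cons, trunkPosL_nil]

lemma nil_mem_trunkPos (ts : List (Bool × CTree)) : [] ∈ trunkPos (.node ts) := by
  rw [trunkPos_node]; exact List.mem_cons_self

/-- Grafting at a trunk vertex adds the trunk of the graft to the pruning. -/
lemma pruneF_cgraft : ∀ (v : List ℕ) (t x : CTree), v ∈ trunkPos t →
    (pruneF (cgraft x v t) : Multiset RTree) = ↑(pruneF t) + ↑(pruneF x) := by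
  intro v
  induction v with
  | nil =>
    rintro ⟨ts⟩ x _
    rw [cgraft_nil, pruneF_node, pruneF_node, pruneFL_append, pruneFL_single]
    simp [← Multiset.coe_add]
  | cons i q ih =>
    rintro ⟨ts⟩ x hv
    rw [trunkPos_node] at hv
    rcases List.mem_cons.mp hv with hv | hv
    · simp at hv
    · obtain ⟨i', hi, q', hpq, hb, hq⟩ := mem_trunkPosL.1 hv
      simp only [Nat.zero_add] at hpq
      obtain ⟨rfl, rfl⟩ : i = i' ∧ q = q' := by injection hpq with h1 h2; exact ⟨h1, h2⟩
      rcases hts : ts[i] with ⟨b0, c0⟩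
      rw [hts] at hb hq
      simp only at hb hq
      subst hb
      rw [cgraft_cons x i q ts hi, hts]
      simp only
      rw [pruneF_node, pruneF_node]
      have hset := pruneFL_set ts i ((false : Bool), cgraft x q c0) hi
      rw [hts, pruneFL_single, pruneFL_single, if_neg (by simp), if_neg (by simp)] at hset
      have hih := ih c0 x hq
      apply add_right_cancel (b := (↑(pruneF c0) : Multiset RTree))
      rw [hset, hih]
      abel

/-- Grafting at a trunk vertex: description of the new trunk positions
and compatibility with further grafting there. -/
lemma trunk_graft : ∀ (v : List ℕ) (t x : CTree), v ∈ trunkPos t →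
    ∃ e : List ℕ → List ℕ,
      ((trunkPos (cgraft x v t) : Multiset (List ℕ)) =
        ↑(trunkPos t) + Multiset.map e ↑(trunkPos x)) ∧
      ∀ (y : CTree) (q : List ℕ),
        cgraft y (e q) (cgraft x v t) = cgraft (cgraft y q x) v t := by
  intro v
  induction v with
  | nil =>
    rintro ⟨ts⟩ x _
    refine ⟨fun q => ts.length :: q, ?_, ?_⟩
    · rw [cgraft_nil, trunkPos_node, trunkPos_node, trunkPosL_append, trunkPosL_single,
        if_neg (by simp)]
      rw [← Multiset.cons_coe, ← Multiset.cons_coe, Multiset.cons_add,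
        ← Multiset.coe_add, Multiset.map_coe]
      simp
    · intro y q
      rw [cgraft_nil]
      have hlen : ts.length < (ts ++ [((false : Bool), x)]).length := by simp
      rw [cgraft_cons _ _ _ _ hlen]
      have h1 : (ts ++ [((false : Bool), x)])[ts.length] = ((false : Bool), x) := by
        simp
      rw [h1, cgraft_nil]
      congr 1
      simp [List.set_append]
  | cons i q' ih =>
    rintro ⟨ts⟩ x hv
    rw [trunkPos_node] at hv
    rcases List.mem_cons.mp hv with hv | hv
    · simp at hv
    · obtain ⟨i', hi, q'', hpq, hb, hq⟩ := mem_trunkPosL.1 hv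
      simp only [Nat.zero_add] at hpq
      obtain ⟨rfl, rfl⟩ : i = i' ∧ q' = q'' := by injection hpq with h1 h2; exact ⟨h1, h2⟩
      rcases hts : ts[i] with ⟨b0, c0⟩
      rw [hts] at hb hq
      simp only at hb hq
      subst hb
      obtain ⟨e', he1, he2⟩ := ih c0 x hq
      refine ⟨fun q => i :: e' q, ?_, ?_⟩
      · rw [cgraft_cons x i q' ts hi, hts]
        simp only
        rw [trunkPos_node, trunkPos_node]
        have hset := trunkPosL_set ts 0 i ((false : Bool), cgraft x q' c0) hi
        simp only [Nat.zero_add] at hset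
        rw [hts, trunkPosL_single, trunkPosL_single, if_neg (by simp), if_neg (by simp)] at hset
        rw [← Multiset.map_coe, ← Multiset.map_coe, he1, Multiset.map_add,
          Multiset.map_map] at hset
        have h2 : (↑(trunkPosL 0 (ts.set i ((false : Bool), cgraft x q' c0))) : Multiset (List ℕ))
            = ↑(trunkPosL 0 ts) + Multiset.map (fun q => i :: e' q) ↑(trunkPos x) := by
          apply add_right_cancel (b := (Multiset.map (i :: ·) ↑(trunkPos c0) : Multiset (List ℕ)))
          rw [hset]
          simp only [Function.comp]
          abel
        rw [← Multiset.cons_coe, ← Multiset.cons_coe, Multiset.cons_add]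
        exact congrArg _ h2
      · intro y q
        rw [cgraft_cons x i q' ts hi, hts]
        simp only
        have hlen : i < (ts.set i ((false : Bool), cgraft x q' c0)).length := by
          simpa using hi
        rw [cgraft_cons _ _ _ _ hlen]
        have hget : (ts.set i ((false : Bool), cgraft x q' c0))[i]
            = ((false : Bool), cgraft x q' c0) := by
          simp
        rw [hget, cgraft_cons _ _ _ _ hi, hts]
        simp only [List.set_set]
        rw [he2]

/-- Membership of old trunk positions after grafting. -/
lemma mem_trunkPos_cgraft {r v : List ℕ} {t : CTree} (x : CTree)
    (hr : r ∈ trunkPos t) (hv : v ∈ trunkPos t) : r ∈ trunkPos (cgraft x v t) := by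
  obtain ⟨e, h1, _⟩ := trunk_graft v t x hv
  have : r ∈ (trunkPos (cgraft x v t) : Multiset (List ℕ)) := by
    rw [h1]
    exact Multiset.mem_add.2 (Or.inl (by exact_mod_cast hr))
  exact_mod_cast this

/-- Grafting at distinct valid positions commutes on the nose. -/
lemma cgraft_comm : ∀ (r v : List ℕ) (t a b : CTree), Val r t → Val v t → r ≠ v →
    cgraft a r (cgraft b v t) = cgraft b v (cgraft a r t) := by
  intro r
  induction r with
  | nil =>
    rintro v ⟨ts⟩ a b _ hv hne
    cases v with
    | nil => exact absurd rfl hne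
    | cons j q =>
      obtain ⟨hj, hvq⟩ := hv
      rw [cgraft_cons b j q ts hj, cgraft_nil, cgraft_nil]
      have hj' : j < (ts ++ [((false : Bool), a)]).length := by simp; omega
      rw [cgraft_cons b j q _ hj']
      have hget : (ts ++ [((false : Bool), a)])[j] = ts[j] := by
        rw [List.getElem_append_left hj]
      rw [hget]
      congr 1
      rw [List.set_append]
      simp [hj]
  | cons i p ih =>
    rintro v ⟨ts⟩ a b hr hv hne
    obtain ⟨hi, hrp⟩ := hr
    cases v with
    | nil =>
      rw [cgraft_nil, cgraft_cons a i p ts hi]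
      have hi' : i < (ts ++ [((false : Bool), b)]).length := by simp; omega
      rw [cgraft_cons a i p _ hi']
      have hget : (ts ++ [((false : Bool), b)])[i] = ts[i] := by
        rw [List.getElem_append_left hi]
      rw [hget, cgraft_nil]
      congr 1
      rw [List.set_append]
      simp [hi]
    | cons j q =>
      obtain ⟨hj, hvq⟩ := hv
      by_cases hij : i = j
      · subst hij
        have hpq : p ≠ q := fun h => hne (by rw [h])
        rw [cgraft_cons b i q ts hi, cgraft_cons a i p ts hi]
        have hlen1 : i < (ts.set i ((ts[i]).1, cgraft b q (ts[i]).2)).length := by simpa using hi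
        have hlen2 : i < (ts.set i ((ts[i]).1, cgraft a p (ts[i]).2)).length := by simpa using hi
        rw [cgraft_cons a i p _ hlen1, cgraft_cons b i q _ hlen2]
        simp only [List.getElem_set_self, List.set_set]
        rw [ih q (ts[i]).2 a b hrp hvq hpq]
      · rw [cgraft_cons b j q ts hj, cgraft_cons a i p ts hi]
        have hlen1 : i < (ts.set j ((ts[j]).1, cgraft b q (ts[j]).2)).length := by simpa using hi
        have hlen2 : j < (ts.set i ((ts[i]).1, cgraft a p (ts[i]).2)).length := by simpa using hj
        rw [cgraft_cons a i p _ hlen1, cgraft_cons b j q _ hlen2]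
        rw [List.getElem_set_ne (by omega), List.getElem_set_ne (by omega)]
        rw [List.set_comm _ _ (by omega)]

/-- Grafting twice at the same vertex: the two orders give the same tree
up to sibling permutation. -/
lemma swap_norm : ∀ (v : List ℕ) (t a b : CTree), Val v t →
    RTree.norm (forget (cgraft a v (cgraft b v t))) =
      RTree.norm (forget (cgraft b v (cgraft a v t))) := by
  intro v
  induction v with
  | nil =>
    rintro ⟨ts⟩ a b _
    rw [cgraft_nil, cgraft_nil, cgraft_nil, cgraft_nil]
    rw [forget_node, forget_node]
    apply RTree.norm_node_perm
    simp only [List.append_assoc, List.cons_append, List.nil_append, forgetL_append,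
      forgetL_cons, forgetL_nil, RTree.normL_append, RTree.normL_cons, RTree.normL_nil]
    exact List.Perm.append_left _ (List.Perm.swap _ _ _)
  | cons i q ih =>
    rintro ⟨ts⟩ a b hv
    obtain ⟨hi, hq⟩ := hv
    rw [cgraft_cons b i q ts hi, cgraft_cons a i q ts hi]
    have hlen1 : i < (ts.set i ((ts[i]).1, cgraft b q (ts[i]).2)).length := by simpa using hi
    have hlen2 : i < (ts.set i ((ts[i]).1, cgraft a q (ts[i]).2)).length := by simpa using hi
    rw [cgraft_cons a i q _ hlen1, cgraft_cons b i q _ hlen2]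
    simp only [List.getElem_set_self, List.set_set]
    rw [forget_node, forget_node, forgetL_set, forgetL_set]
    exact RTree.norm_node_set_congr _ _ (ih (ts[i]).2 a b hq)

end CTree
lemma forestQ_congr {l₁ l₂ : List RTree} (h : (↑l₁ : Multiset RTree) = ↑l₂) :
    forestQ l₁ = forestQ l₂ := by
  unfold forestQ
  rw [← Multiset.map_coe, ← Multiset.map_coe, h]

lemma pairQ_comm (t a b : CTree) {r v : List ℕ}
    (hr : r ∈ CTree.trunkPos t) (hv : v ∈ CTree.trunkPos t) :
    pairQ (CTree.cgraft a r (CTree.cgraft b v t)) =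
      pairQ (CTree.cgraft b v (CTree.cgraft a r t)) := by
  by_cases hrv : r = v
  · subst hrv
    unfold pairQ
    refine Prod.ext ?_ ?_
    · exact Quotient.sound (CTree.swap_norm r t a b (CTree.val_of_mem_trunkPos r t hr))
    · apply forestQ_congr
      rw [CTree.pruneF_cgraft r (CTree.cgraft b r t) a (CTree.mem_trunkPos_cgraft b hr hr),
        CTree.pruneF_cgraft r (CTree.cgraft a r t) b (CTree.mem_trunkPos_cgraft a hr hr),
        CTree.pruneF_cgraft r t b hr, CTree.pruneF_cgraft r t a hr]
      abel
  · rw [CTree.cgraft_comm r v t a b (CTree.val_of_mem_trunkPos r t hr)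
      (CTree.val_of_mem_trunkPos v t hv) hrv]

lemma coe_flatMap {α β : Type*} (l : List α) (f : α → List β) :
    (↑(l.flatMap f) : Multiset β) = (↑l : Multiset α).bind (fun a => ↑(f a)) := by
  induction l with
  | nil => simp
  | cons a l ih => simp [List.flatMap_cons, ih]

lemma toMV_perm {l₁ l₂ : List CTree} (h : l₁.Perm l₂) : toMV l₁ = toMV l₂ :=
  List.Perm.sum_eq (h.map δV)

lemma toMV_split {l₁ l₂ l₃ : List CTree} (h : (↑l₁ : Multiset CTree) = ↑l₂ + ↑l₃) :
    toMV l₁ = toMV l₂ + toMV l₃ := by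
  rw [Multiset.coe_add, Multiset.coe_eq_coe] at h
  rw [toMV_perm h]
  simp [toMV, List.map_append]

lemma toMV_congr {l₁ l₂ : List CTree}
    (h : (↑(l₁.map pairQ) : Multiset (TreeQ × Multiset TreeQ)) = ↑(l₂.map pairQ)) :
    toMV l₁ = toMV l₂ := by
  rw [Multiset.coe_eq_coe] at h
  have h1 : l₁.map δV = (l₁.map pairQ).map (fun p => Finsupp.single p (1 : ℚ)) := by
    rw [List.map_map]; rfl
  have h2 : l₂.map δV = (l₂.map pairQ).map (fun p => Finsupp.single p (1 : ℚ)) := by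
    rw [List.map_map]; rfl
  unfold toMV
  rw [h1, h2]
  exact List.Perm.sum_eq (h.map _)
theorem doubling_associator (c₁ c₂ c₃ : CTree)
    (h₁ : c₁.adm = true) (h₂ : c₂.adm = true) (h₃ : c₃.adm = true) :
    (toMV ((dmul c₂ c₃).flatMap fun w => dmul c₁ w) -
        toMV ((dmul c₁ c₂).flatMap fun w => dmul w c₃) =
      toMV ((CTree.trunkPos c₃).flatMap fun v => (CTree.trunkPos c₃).map fun r =>
        CTree.cgraft c₁ r (CTree.cgraft c₂ v c₃))) ∧
    toMV ((CTree.trunkPos c₃).flatMap fun v => (CTree.trunkPos c₃).map fun r =>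
        CTree.cgraft c₁ r (CTree.cgraft c₂ v c₃)) =
      toMV ((CTree.trunkPos c₃).flatMap fun v => (CTree.trunkPos c₃).map fun r =>
        CTree.cgraft c₂ r (CTree.cgraft c₁ v c₃)) := by
  classical
  have key : (↑((dmul c₂ c₃).flatMap fun w => dmul c₁ w) : Multiset CTree)
      = ↑((dmul c₁ c₂).flatMap fun w => dmul w c₃)
        + ↑((CTree.trunkPos c₃).flatMap fun v => (CTree.trunkPos c₃).map fun r =>
            CTree.cgraft c₁ r (CTree.cgraft c₂ v c₃)) := by
    rw [coe_flatMap, coe_flatMap, coe_flatMap]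
    simp only [dmul]
    rw [← Multiset.map_coe, Multiset.bind_map]
    have step : ∀ v ∈ (↑(CTree.trunkPos c₃) : Multiset (List ℕ)),
        (↑((CTree.trunkPos (CTree.cgraft c₂ v c₃)).map fun p =>
            CTree.cgraft c₁ p (CTree.cgraft c₂ v c₃)) : Multiset CTree)
          = Multiset.map (fun r => CTree.cgraft c₁ r (CTree.cgraft c₂ v c₃))
              ↑(CTree.trunkPos c₃)
            + Multiset.map (fun q => CTree.cgraft (CTree.cgraft c₁ q c₂) v c₃)
              ↑(CTree.trunkPos c₂) := by
      intro v hv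
      have hv' : v ∈ CTree.trunkPos c₃ := by exact_mod_cast hv
      obtain ⟨e, he1, he2⟩ := CTree.trunk_graft v c₃ c₂ hv'
      rw [← Multiset.map_coe, he1, Multiset.map_add, Multiset.map_map]
      congr 1
      exact Multiset.map_congr rfl fun q _ => he2 c₁ q
    rw [Multiset.bind_congr step, Multiset.bind_add]
    have hR : ((↑(CTree.trunkPos c₃) : Multiset (List ℕ)).bind fun v =>
        Multiset.map (fun r => CTree.cgraft c₁ r (CTree.cgraft c₂ v c₃)) ↑(CTree.trunkPos c₃))
        = (↑(CTree.trunkPos c₃) : Multiset (List ℕ)).bind fun v =>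
            ↑((CTree.trunkPos c₃).map fun r => CTree.cgraft c₁ r (CTree.cgraft c₂ v c₃)) := by
      apply Multiset.bind_congr
      intro v _
      exact Multiset.map_coe _ _
    have hB : ((↑(CTree.trunkPos c₃) : Multiset (List ℕ)).bind fun v =>
        Multiset.map (fun q => CTree.cgraft (CTree.cgraft c₁ q c₂) v c₃) ↑(CTree.trunkPos c₂))
        = (↑((CTree.trunkPos c₂).map fun p => CTree.cgraft c₁ p c₂) : Multiset CTree).bind
            fun w => ↑((CTree.trunkPos c₃).map fun p => CTree.cgraft w p c₃) := by
      rw [Multiset.bind_map_comm, ← Multiset.map_coe, Multiset.bind_map]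
      apply Multiset.bind_congr
      intro q _
      exact Multiset.map_coe _ _
    rw [hR, hB, add_comm]
  have hsum := toMV_split key
  constructor
  · rw [hsum]; abel
  · apply toMV_congr
    rw [← Multiset.map_coe, ← Multiset.map_coe, coe_flatMap, coe_flatMap,
      Multiset.map_bind, Multiset.map_bind]
    have step1 : ∀ v ∈ (↑(CTree.trunkPos c₃) : Multiset (List ℕ)),
        Multiset.map pairQ (↑((CTree.trunkPos c₃).map fun r =>
            CTree.cgraft c₁ r (CTree.cgraft c₂ v c₃)) : Multiset CTree)
          = Multiset.map (fun r => pairQ (CTree.cgraft c₂ v (CTree.cgraft c₁ r c₃)))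
              ↑(CTree.trunkPos c₃) := by
      intro v hv
      have hv' : v ∈ CTree.trunkPos c₃ := by exact_mod_cast hv
      rw [← Multiset.map_coe, Multiset.map_map]
      apply Multiset.map_congr rfl
      intro r hr
      have hr' : r ∈ CTree.trunkPos c₃ := by exact_mod_cast hr
      exact pairQ_comm c₃ c₁ c₂ hr' hv'
    rw [Multiset.bind_congr step1, Multiset.bind_map_comm]
    apply Multiset.bind_congr
    intro v _
    rw [← Multiset.map_coe, Multiset.map_map]
    rfl
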